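/- arXiv:0801.0007 — 2 statements merged into one kernel-verified Lean document; each statement's English description precedes it below -/
import Mathlib

section
/- Let X be a finite T₀-space and x ∈ X. Then x is a weak point (i.e., Û_x or F̂_x is contractible) if and only if the link Ĉ_x = Û_x ⊕ F̂_x is contractible. -/
/-!
STATEMENT 1: Let X be a finite T₀-space and x ∈ X. Then x is a weak point
(i.e. Û_x or F̂_x is contractible) iff the link Ĉ_x = Û_x ⊕ F̂_x is contractible.

A finite T₀-space is identified with a finite poset with the down-set (Alexandrov)
topology; Û_x = {y : y < x}, F̂_x = {y : y > x}, Ĉ_x = {y : y < x ∨ y > x}, all with the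
subspace topology.  (Note that, as subspaces of X, one has Ĉ_x = Û_x ⊕ F̂_x.)
-/

noncomputable section

/-- The Alexandrov "down-set" topology on a poset: open sets are the lower sets. -/
def downTop (X : Type*) [Preorder X] : TopologicalSpace X := Topology.lowerSet X

/-- A subset `A` of a poset is contractible when, endowed with the subspace topology
coming from the down-set topology of the ambient poset, it is homotopy equivalent to a
point. -/
def SubContractible {X : Type*} [Preorder X] (A : Set X) : Prop :=
  @ContractibleSpace A (TopologicalSpace.induced Subtype.val (downTop X))

/-
In the lower-set topology of a poset, two pointwise comparable maps into it are homotopic, and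
for a finite domain every homotopy is a finite fence of such comparisons. Hence deleting a beat
point (one whose strict down-set has a maximum or whose strict up-set has a minimum) is a
homotopy equivalence, while on a finite poset without beat points a monotone map comparable
with the identity is the identity, so such a poset is contractible only if it is a point.

The link of `x` is the join of `Û_x` below `F̂_x`. A beat point of either factor stays one in
the join, so removing it changes neither side of the equivalence, and induction on the size
reduces to factors without beat points. Then a contractible factor is a point, which is an
extremum of the join; conversely, a beat point of a contractible join forces a maximum on `Û_x`
or a minimum on `F̂_x`, and a join without beat points is contractible only if it is a point.
-/

open Set Topology Relation

section LowerSetTopology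

variable {X : Type*} [Preorder X] [TopologicalSpace X] [Topology.IsLowerSet X]

instance Topology.IsLowerSet.set (A : Set X) : Topology.IsLowerSet A :=
  Topology.isLowerSet_iff_nhds.2 fun a => by
    rw [nhds_subtype, IsLowerSet.nhds_eq_principal_Iic, Filter.comap_principal]
    rfl

theorem subContractible_iff_contractibleSpace (A : Set X) :
    SubContractible A ↔ ContractibleSpace A := by
  rw [SubContractible, downTop, ← IsLowerSet.topology_eq X]

end LowerSetTopology

section Homotopy

variable {Z P : Type*} [TopologicalSpace Z] [TopologicalSpace P]

theorem ContinuousMap.homotopic_of_le [Preorder P] [Topology.IsLowerSet P] {f g : C(Z, P)}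
    (h : ∀ a, f a ≤ g a) : f.Homotopic g := by
  have hnear : ∀ (φ : C(Z, P)) a, ∀ᶠ b in 𝓝 a, φ b ≤ φ a := fun φ a =>
    (φ.continuous.tendsto a).eventually
      ((IsLowerSet.isOpen_iff_isLowerSet.2 (isLowerSet_Iic _)).eventually_mem le_rfl)
  refine ⟨⟨⟨fun p => if p.1 = 1 then g p.2 else f p.2,
    continuous_iff_continuousAt.2 fun p => ?_⟩, by simp, by simp⟩⟩
  rw [ContinuousAt, IsLowerSet.nhds_eq_principal_Iic (α := P), Filter.tendsto_principal]
  by_cases hp : p.1 = 1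
  · filter_upwards [continuousAt_snd.eventually (hnear g p.2)] with q hq
    simp only [hp, if_true]
    split_ifs
    exacts [hq, (h _).trans hq]
  · filter_upwards [continuousAt_fst.eventually (isOpen_ne.mem_nhds hp),
      continuousAt_snd.eventually (hnear f p.2)] with q h1 h2
    simpa [hp, h1] using h2

theorem ContractibleSpace.of_orderBot [Preorder P] [Topology.IsLowerSet P] [OrderBot P] :
    ContractibleSpace P :=
  (contractible_iff_id_nullhomotopic P).2
    ⟨⊥, (ContinuousMap.homotopic_of_le fun _ => bot_le).symm⟩

theorem ContractibleSpace.of_orderTop [Preorder P] [Topology.IsLowerSet P] [OrderTop P] :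
    ContractibleSpace P :=
  (contractible_iff_id_nullhomotopic P).2 ⟨⊤, ContinuousMap.homotopic_of_le fun _ => le_top⟩

theorem ContinuousMap.Homotopic.reflTransGen_symmGen_le [Finite Z] [PartialOrder P]
    [Topology.IsLowerSet P] {f g : C(Z, P)} (h : f.Homotopic g) :
    ReflTransGen (SymmGen (· ≤ ·)) f g := by
  obtain ⟨F⟩ := h
  have hopen : ∀ φ : C(Z, P), IsOpen {ψ : C(Z, P) | ψ ≤ φ} := fun φ => by
    simp only [ContinuousMap.le_def, ofPred_forall]
    exact isOpen_iInter_of_finite fun a => by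
      simpa [MapsTo] using isOpen_setOfPred_mapsTo (isCompact_singleton (x := a))
        (IsLowerSet.isOpen_iff_isLowerSet.2 (isLowerSet_Iic (φ a)))
  have := PreconnectedSpace.induction₂'
    (fun s t => ReflTransGen (SymmGen (· ≤ ·)) (F.curry s) (F.curry t))
    (fun s => ((F.curry.continuous.tendsto s).eventually
      ((hopen _).eventually_mem (le_refl (F.curry s)))).mono
        fun t ht => ⟨.single (.inr ht), .single (.inl ht)⟩)
    ⟨fun _ _ _ => ReflTransGen.trans⟩ 0 1
  simpa using this

end Homotopy

section BeatPoints

variable {X : Type*} [PartialOrder X] {A B : Set X} {z : X}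

def IsBeatPoint (A : Set X) (z : X) : Prop :=
  (∃ m, IsGreatest {y ∈ A | y < z} m) ∨ ∃ m, IsLeast {y ∈ A | z < y} m

theorem IsBeatPoint.union_right (hAB : ∀ a ∈ A, ∀ b ∈ B, a < b) (hz : z ∈ A)
    (h : IsBeatPoint A z) : IsBeatPoint (A ∪ B) z := by
  rcases h with ⟨m, ⟨hmA, hmz⟩, hm⟩ | ⟨m, ⟨hmA, hzm⟩, hm⟩
  · refine .inl ⟨m, ⟨.inl hmA, hmz⟩, ?_⟩
    rintro y ⟨hyA | hyB, hyz⟩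
    exacts [hm ⟨hyA, hyz⟩, absurd (hAB z hz y hyB) hyz.not_gt]
  · refine .inr ⟨m, ⟨.inl hmA, hzm⟩, ?_⟩
    rintro y ⟨hyA | hyB, hzy⟩
    exacts [hm ⟨hyA, hzy⟩, (hAB m hmA y hyB).le]

theorem IsBeatPoint.union_left (hAB : ∀ a ∈ A, ∀ b ∈ B, a < b) (hz : z ∈ B)
    (h : IsBeatPoint B z) : IsBeatPoint (A ∪ B) z := by
  rcases h with ⟨m, ⟨hmB, hmz⟩, hm⟩ | ⟨m, ⟨hmB, hzm⟩, hm⟩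
  · refine .inl ⟨m, ⟨.inr hmB, hmz⟩, ?_⟩
    rintro y ⟨hyA | hyB, hyz⟩
    exacts [(hAB y hyA m hmB).le, hm ⟨hyB, hyz⟩]
  · refine .inr ⟨m, ⟨.inr hmB, hzm⟩, ?_⟩
    rintro y ⟨hyA | hyB, hzy⟩
    exacts [absurd (hAB y hyA z hz) hzy.not_gt, hm ⟨hyB, hzy⟩]

theorem IsBeatPoint.of_union_of_mem_left (hAB : ∀ a ∈ A, ∀ b ∈ B, a < b) (hz : z ∈ A)
    (h : IsBeatPoint (A ∪ B) z) : IsBeatPoint A z ∨ ∃ m, IsLeast B m := by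
  rcases h with ⟨m, ⟨hmA | hmB, hmz⟩, hm⟩ | ⟨m, ⟨hmA | hmB, hzm⟩, hm⟩
  · exact .inl (.inl ⟨m, ⟨hmA, hmz⟩, fun y hy => hm ⟨.inl hy.1, hy.2⟩⟩)
  · exact absurd (hAB z hz m hmB) hmz.not_gt
  · exact .inl (.inr ⟨m, ⟨hmA, hzm⟩, fun y hy => hm ⟨.inl hy.1, hy.2⟩⟩)
  · exact .inr ⟨m, hmB, fun y hy => hm ⟨.inr hy, hAB z hz y hy⟩⟩

theorem IsBeatPoint.of_union_of_mem_right (hAB : ∀ a ∈ A, ∀ b ∈ B, a < b) (hz : z ∈ B)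
    (h : IsBeatPoint (A ∪ B) z) : IsBeatPoint B z ∨ ∃ m, IsGreatest A m := by
  rcases h with ⟨m, ⟨hmA | hmB, hmz⟩, hm⟩ | ⟨m, ⟨hmA | hmB, hzm⟩, hm⟩
  · exact .inr ⟨m, hmA, fun y hy => hm ⟨.inl hy, hAB y hy z hz⟩⟩
  · exact .inl (.inl ⟨m, ⟨hmB, hmz⟩, fun y hy => hm ⟨.inr hy.1, hy.2⟩⟩)
  · exact absurd (hAB m hmA z hz) hzm.not_gt
  · exact .inl (.inr ⟨m, ⟨hmB, hzm⟩, fun y hy => hm ⟨.inr hy.1, hy.2⟩⟩)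

theorem IsGreatest.monotoneOn_update_id [DecidableEq X] {m : X}
    (hm : IsGreatest {y ∈ A | y < z} m) : MonotoneOn (Function.update id z m) A := by
  intro a ha b hb hab
  simp only [Function.update_apply, id]
  split_ifs with haz hbz hbz
  · exact le_rfl
  · exact hm.1.2.le.trans (haz ▸ hab)
  · exact hm.2 ⟨ha, (hbz ▸ hab).lt_of_ne haz⟩
  · exact hab

theorem IsBeatPoint.exists_retraction (h : IsBeatPoint A z) :
    ∃ r : X → X, MapsTo r A (A \ {z}) ∧ MonotoneOn r A ∧ EqOn r id (A \ {z}) ∧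
      ((∀ a ∈ A, r a ≤ a) ∨ ∀ a ∈ A, a ≤ r a) := by
  classical
  obtain ⟨m, hm⟩ := exists_or.2 h
  have hmA : m ∈ A \ {z} := by
    rcases hm with hm | hm
    exacts [⟨hm.1.1, hm.1.2.ne⟩, ⟨hm.1.1, hm.1.2.ne'⟩]
  refine ⟨Function.update id z m, fun w hw => ?_, ?_,
    fun w hw => Function.update_of_ne hw.2 _ _, ?_⟩
  · simp only [Function.update_apply, id]
    split_ifs with hwz
    exacts [hmA, ⟨hw, hwz⟩]
  · rcases hm with hm | hm
    exacts [hm.monotoneOn_update_id, IsGreatest.monotoneOn_update_id (X := Xᵒᵈ) hm |>.dual]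
  · rcases hm with hm | hm
    · refine .inl fun w _ => ?_
      simp only [Function.update_apply, id]
      split_ifs with hwz
      exacts [hwz ▸ hm.1.2.le, le_rfl]
    · refine .inr fun w _ => ?_
      simp only [Function.update_apply, id]
      split_ifs with hwz
      exacts [hwz ▸ hm.1.2.le, le_rfl]

end BeatPoints

section Rigidity

variable {X : Type*} [PartialOrder X] {A : Set X} [Finite A]

theorem Monotone.eq_id_of_symmGen_id (hA : ∀ z ∈ A, ¬IsBeatPoint A z) {f : A → A}
    (hf : Monotone f) (h : SymmGen (· ≤ ·) id f) : f = id := by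
  funext a
  rcases h with hge | hle
  · induction a using WellFoundedGT.induction with
    | ind a ih =>
      by_contra hne
      refine hA a a.2 (.inr ⟨f a, ⟨(f a).2, (hge a).lt_of_ne (Ne.symm hne)⟩, ?_⟩)
      rintro y ⟨hyA, hay⟩
      have := hf (show a ≤ ⟨y, hyA⟩ from hay.le)
      rwa [ih ⟨y, hyA⟩ hay] at this
  · induction a using WellFoundedLT.induction with
    | ind a ih =>
      by_contra hne
      refine hA a a.2 (.inl ⟨f a, ⟨(f a).2, (hle a).lt_of_ne hne⟩, ?_⟩)
      rintro y ⟨hyA, hya⟩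
      have := hf (show ⟨y, hyA⟩ ≤ a from hya.le)
      rwa [ih ⟨y, hyA⟩ hya] at this

end Rigidity

section FiniteSpaces

variable {X : Type*} [PartialOrder X] [TopologicalSpace X] [Topology.IsLowerSet X]
  {A B S T : Set X}

theorem nonempty_homotopyEquiv_of_retraction (hST : S ⊆ T) {r : X → X}
    (hrT : MapsTo r T S) (hr : MonotoneOn r T) (hrS : EqOn r id S)
    (hcomp : (∀ a ∈ T, r a ≤ a) ∨ ∀ a ∈ T, a ≤ r a) :
    Nonempty (ContinuousMap.HomotopyEquiv S T) := by
  let ρ : C(T, S) :=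
    ⟨hrT.restrict, IsLowerSet.monotone_iff_continuous.1 fun a b hab => hr a.2 b.2 hab⟩
  let ι : C(S, T) := ⟨inclusion hST, continuous_inclusion hST⟩
  refine ⟨⟨ι, ρ, ?_, ?_⟩⟩
  · convert ContinuousMap.Homotopic.refl (ContinuousMap.id S)
    ext s
    exact hrS s.2
  · rcases hcomp with hle | hge
    · exact ContinuousMap.homotopic_of_le fun a => hle _ a.2
    · exact (ContinuousMap.homotopic_of_le fun a => hge _ a.2).symm

theorem IsBeatPoint.contractibleSpace_diff_singleton_iff {z : X} (h : IsBeatPoint A z) :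
    ContractibleSpace ↥(A \ {z}) ↔ ContractibleSpace A := by
  obtain ⟨r, hrA, hr, hrS, hcomp⟩ := h.exists_retraction
  obtain ⟨e⟩ := nonempty_homotopyEquiv_of_retraction sdiff_subset hrA hr hrS hcomp
  exact e.contractibleSpace_iff

theorem IsLeast.contractibleSpace {m : X} (h : IsLeast S m) : ContractibleSpace S :=
  letI := h.orderBot
  .of_orderBot

theorem IsGreatest.contractibleSpace {m : X} (h : IsGreatest S m) : ContractibleSpace S :=
  letI := h.orderTop
  .of_orderTop

theorem ContinuousMap.coe_eq_id_of_reflTransGen [Finite A]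
    (hA : ∀ z ∈ A, ¬IsBeatPoint A z) {g : C(A, A)}
    (hg : ReflTransGen (SymmGen (· ≤ ·)) (ContinuousMap.id A) g) : ⇑g = id := by
  induction hg with
  | refl => rfl
  | @tail g h _ hgh ih =>
    refine (IsLowerSet.monotone_iff_continuous.2 h.continuous).eq_id_of_symmGen_id hA ?_
    exact hgh.imp (fun hle => ih ▸ ContinuousMap.le_def.1 hle)
      (fun hle => ih ▸ ContinuousMap.le_def.1 hle)

theorem exists_isBeatPoint_or_eq_singleton [Finite A] [ContractibleSpace A] :
    (∃ z ∈ A, IsBeatPoint A z) ∨ ∃ a, A = {a} := by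
  refine or_iff_not_imp_left.2 fun hA => ?_
  push Not at hA
  obtain ⟨c, hc⟩ := id_nullhomotopic A
  have hconst := ContinuousMap.coe_eq_id_of_reflTransGen hA hc.reflTransGen_symmGen_le
  refine ⟨c, eq_singleton_iff_unique_mem.2 ⟨c.2, fun a ha => ?_⟩⟩
  exact congrArg Subtype.val (congrFun hconst ⟨a, ha⟩).symm

theorem contractibleSpace_union_iff_of_forall_not_isBeatPoint [Finite A] [Finite B]
    (hAB : ∀ a ∈ A, ∀ b ∈ B, a < b) (hbA : ∀ z ∈ A, ¬IsBeatPoint A z)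
    (hbB : ∀ z ∈ B, ¬IsBeatPoint B z) :
    ContractibleSpace ↥(A ∪ B) ↔ ContractibleSpace A ∨ ContractibleSpace B := by
  constructor
  · intro h
    rcases exists_isBeatPoint_or_eq_singleton (A := A ∪ B) with
      ⟨w, hwA | hwB, hw⟩ | ⟨p, hp⟩
    · rcases hw.of_union_of_mem_left hAB hwA with hw | ⟨m, hm⟩
      exacts [absurd hw (hbA w hwA), .inr hm.contractibleSpace]
    · rcases hw.of_union_of_mem_right hAB hwB with hw | ⟨m, hm⟩
      exacts [absurd hw (hbB w hwB), .inl hm.contractibleSpace]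
    · rcases (hp ▸ mem_singleton p : p ∈ A ∪ B) with hpA | hpB
      · obtain rfl : A = {p} :=
          Subset.antisymm (hp ▸ subset_union_left) (singleton_subset_iff.2 hpA)
        exact .inl inferInstance
      · obtain rfl : B = {p} :=
          Subset.antisymm (hp ▸ subset_union_right) (singleton_subset_iff.2 hpB)
        exact .inr inferInstance
  · rintro (h | h)
    · rcases exists_isBeatPoint_or_eq_singleton (A := A) with ⟨z, hzA, hz⟩ | ⟨a, rfl⟩
      · exact absurd hz (hbA z hzA)
      · refine IsLeast.contractibleSpace ⟨.inl rfl, ?_⟩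
        rintro y (rfl | hy)
        exacts [le_rfl, (hAB a rfl y hy).le]
    · rcases exists_isBeatPoint_or_eq_singleton (A := B) with ⟨z, hzB, hz⟩ | ⟨b, rfl⟩
      · exact absurd hz (hbB z hzB)
      · refine IsGreatest.contractibleSpace ⟨.inr rfl, ?_⟩
        rintro y (hy | rfl)
        exacts [(hAB y hy b rfl).le, le_rfl]

theorem contractibleSpace_union_iff [Finite A] [Finite B] (hAB : ∀ a ∈ A, ∀ b ∈ B, a < b) :
    ContractibleSpace ↥(A ∪ B) ↔ ContractibleSpace A ∨ ContractibleSpace B := by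
  induction hn : A.ncard + B.ncard using Nat.strong_induction_on generalizing A B with
  | _ n ih =>
  subst hn
  by_cases hbA : ∃ z ∈ A, IsBeatPoint A z
  · obtain ⟨z, hzA, hz⟩ := hbA
    have hzB : z ∉ B := fun hzB => (hAB z hzA z hzB).false
    rw [← (hz.union_right hAB hzA).contractibleSpace_diff_singleton_iff, union_sdiff_distrib,
      sdiff_singleton_eq_self hzB, ih _ ?_ (fun a ha => hAB a ha.1) rfl,
      hz.contractibleSpace_diff_singleton_iff]
    exact Nat.add_lt_add_right (ncard_sdiff_singleton_lt_of_mem hzA) _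
  by_cases hbB : ∃ z ∈ B, IsBeatPoint B z
  · obtain ⟨z, hzB, hz⟩ := hbB
    have hzA : z ∉ A := fun hzA => (hAB z hzA z hzB).false
    rw [← (hz.union_left hAB hzB).contractibleSpace_diff_singleton_iff, union_sdiff_distrib,
      sdiff_singleton_eq_self hzA, ih _ ?_ (fun a ha b hb => hAB a ha b hb.1) rfl,
      hz.contractibleSpace_diff_singleton_iff]
    exact Nat.add_lt_add_left (ncard_sdiff_singleton_lt_of_mem hzB) _
  push Not at hbA hbB
  exact contractibleSpace_union_iff_of_forall_not_isBeatPoint hAB hbA hbB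

end FiniteSpaces

theorem weak_point_iff_link_contractible (X : Type) [PartialOrder X] [Fintype X] (x : X) :
    (SubContractible {y : X | y < x} ∨ SubContractible {y : X | x < y}) ↔
      SubContractible {y : X | y < x ∨ x < y} := by
  let := downTop X
  have : Topology.IsLowerSet X := ⟨rfl⟩
  simp only [subContractible_iff_contractibleSpace]
  exact (contractibleSpace_union_iff fun a ha b hb => lt_trans ha hb).symm
end
end

section
/- Let X and Y be nonempty finite T₀-spaces. The non-Hausdorff join X ⊕ Y is collapsible (as a finite space) if and only if X or Y is collapsible. -/
/-!
STATEMENT 6: Let X and Y be nonempty finite T₀-spaces. The non-Hausdorff join X ⊕ Y is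
collapsible (as a finite space) if and only if X or Y is collapsible.

A finite T₀-space is identified with a finite poset with the down-set topology; the
non-Hausdorff join is the ordered sum `X ⊕ₗ Y` (every point of X below every point of Y).
A point x of a finite space is a weak point if the subspace of points strictly below x or
the subspace of points strictly above x is contractible; collapsibility means reaching a
one-point space by successively removing weak points.
-/

noncomputable section

/-- `x` is a weak point of the subspace `A`: the set of points of `A` strictly below `x`
or the set of points of `A` strictly above `x` is contractible. -/
def IsWeakPointIn {X : Type*} [PartialOrder X] (A : Set X) (x : X) : Prop :=
  x ∈ A ∧ (SubContractible {y | y ∈ A ∧ y < x} ∨ SubContractible {y | y ∈ A ∧ x < y})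

/-- Elementary collapse of finite spaces: removal of a single weak point. -/
def ElemSpaceCollapse {X : Type*} [PartialOrder X] (A B : Set X) : Prop :=
  ∃ x, IsWeakPointIn A x ∧ B = A \ {x}

/-- The finite space `A` collapses to `B`: a finite sequence of elementary collapses. -/
def SpaceCollapses {X : Type*} [PartialOrder X] (A B : Set X) : Prop :=
  Relation.ReflTransGen ElemSpaceCollapse A B

/-- The finite space `A` is collapsible: it collapses to a one-point subspace. -/
def SpaceCollapsible {X : Type*} [PartialOrder X] (A : Set X) : Prop :=
  ∃ y ∈ A, SpaceCollapses A {y}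


/-!
A homotopy between maps of finite spaces amounts to a zigzag of pointwise comparable monotone maps
(Stong), so a finite poset is contractible iff the identity and a constant map lie in one component
of its poset of monotone self-maps. In this form, removing a beat point (one whose strict lower set
has a maximum or whose strict upper set has a minimum) does not change contractibility, and a
contractible poset with two points has one, since without beat points the identity is comparable
only with itself. Beat points are weak, so contractible finite spaces are collapsible; and since a
beat point of `A ⊕ B` lying in `A` is a beat point of `A` unless `B` has a least element, `A ⊕ B` is
contractible iff `A` or `B` is.

The strict lower set of `x ∈ A` in `A ⊕ B` is the one in `A`, and its strict upper set is the one in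
`A` joined with `B`, so `x` is weak in `A ⊕ B` iff it is weak in `A` or `B` is contractible. Hence a
collapse of `A ⊕ B` either removes weak points of the two sides until one side is a point, or
reaches a stage where one side is contractible, hence collapsible. Conversely a collapse of `A`
lifts to `A ⊕ B`, and once `A` is a point, the points of `B` can be removed one by one.
-/

open Relation Topology Filter Sum

theorem Relation.EqvGen.lift {α β : Type*} {r : α → α → Prop} {p : β → β → Prop} {a b : α}
    (f : α → β) (h : ∀ a b, r a b → p (f a) (f b)) (hab : EqvGen r a b) :
    EqvGen p (f a) (f b) := by
  induction hab with
  | rel a b hab => exact .rel _ _ (h a b hab)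
  | refl => exact .refl _
  | symm _ _ _ ih => exact .symm _ _ ih
  | trans _ _ _ _ _ ih₁ ih₂ => exact .trans _ _ _ ih₁ ih₂

def IsOrderContractible (P : Type*) [Preorder P] : Prop :=
  ∃ c : P, EqvGen (· ≤ ·) (OrderHom.id : P →o P) (OrderHom.const P c)

namespace IsOrderContractible

variable {P Q : Type*} [Preorder P] [Preorder Q]

theorem nonempty (h : IsOrderContractible P) : Nonempty P :=
  let ⟨c, _⟩ := h
  ⟨c⟩

theorem of_isTop {m : P} (hm : IsTop m) : IsOrderContractible P :=
  ⟨m, .rel _ _ fun x => hm x⟩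

theorem of_isBot {m : P} (hm : IsBot m) : IsOrderContractible P :=
  ⟨m, .symm _ _ (.rel _ _ fun x => hm x)⟩

theorem of_subsingleton [Subsingleton P] (c : P) : IsOrderContractible P :=
  of_isTop (m := c) fun _ => (Subsingleton.elim _ _).le

theorem iff_of_retraction (i : Q →o P) (r : P →o Q) (hri : r.comp i = OrderHom.id)
    (hir : SymmGen (· ≤ ·) (i.comp r) OrderHom.id) :
    IsOrderContractible P ↔ IsOrderContractible Q := by
  constructor
  · rintro ⟨c, hc⟩
    refine ⟨r c, ?_⟩
    have := hc.lift (p := (· ≤ ·)) (fun f => r.comp (f.comp i))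
      fun _ _ h x => r.mono (h (i x))
    rwa [OrderHom.id_comp, hri] at this
  · rintro ⟨d, hd⟩
    refine ⟨i d, .trans _ _ _ (.symm _ _ (EqvGen.symmGen_le_eqvGen _ _ _ hir)) ?_⟩
    exact hd.lift (p := (· ≤ ·)) (fun g => i.comp (g.comp r)) fun _ _ h x => i.mono (h (r x))

end IsOrderContractible

theorem OrderIso.isOrderContractible_iff {P Q : Type*} [Preorder P] [Preorder Q] (e : P ≃o Q) :
    IsOrderContractible P ↔ IsOrderContractible Q :=
  IsOrderContractible.iff_of_retraction (e.symm : Q →o P) (e : P →o Q)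
    (OrderHom.ext _ _ (funext e.apply_symm_apply)) (.of_le fun x => (e.symm_apply_apply x).le)

section LowerSetTopology

variable {α : Type*} [Preorder α] [TopologicalSpace α] [Topology.IsLowerSet α]

theorem isClopen_setOf_eqvGen_le (a : α) : IsClopen {b | EqvGen (· ≤ ·) a b} :=
  ⟨Topology.IsLowerSet.isClosed_iff_isUpper.2 fun _ _ hbc hb => .trans _ _ _ hb (.rel _ _ hbc),
    Topology.IsLowerSet.isOpen_iff_isLowerSet.2 fun _ _ hcb hb =>
      .trans _ _ _ hb (.symm _ _ (.rel _ _ hcb))⟩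

end LowerSetTopology

namespace Topology.WithLowerSet

variable {P Q : Type*} [Preorder P] [Preorder Q]

theorem homotopic_map_of_le {f g : P →o Q} (hfg : f ≤ g) : (map f).Homotopic (map g) := by
  refine ⟨⟨⟨fun p => if p.1 = 1 then map g p.2 else map f p.2, ?_⟩,
    fun _ => if_neg zero_ne_one, fun _ => if_pos rfl⟩⟩
  rw [continuous_def]
  intro U hU
  convert (isOpen_univ.prod ((map g).continuous.isOpen_preimage U hU)).union
    ((isOpen_compl_singleton (x := (1 : unitInterval))).prod
      ((map f).continuous.isOpen_preimage U hU)) using 1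
  ext ⟨t, x⟩
  by_cases ht : t = 1
  · simp [ht]
  · have hU := Topology.IsLowerSet.isOpen_iff_isLowerSet.1 hU
    simp only [ht, if_false, Set.mem_preimage, Set.mem_union, Set.mem_prod, Set.mem_univ,
      true_and, Set.mem_compl_iff, Set.mem_singleton_iff, not_false_eq_true]
    exact ⟨Or.inr, fun h => h.elim (hU (hfg x)) id⟩

theorem homotopic_map_of_eqvGen {f g : P →o Q} (h : EqvGen (· ≤ ·) f g) :
    (map f).Homotopic (map g) := by
  induction h with
  | rel f g hfg => exact homotopic_map_of_le hfg
  | refl => exact .refl _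
  | symm _ _ _ ih => exact ih.symm
  | trans _ _ _ _ _ ih₁ ih₂ => exact ih₁.trans ih₂

theorem continuous_toLowerSet_orderHom [Finite P] {T : Type*} [TopologicalSpace T]
    (γ : T → P →o Q) (hγ : ∀ x, Continuous fun t => toLowerSet (γ t x)) :
    Continuous (toLowerSet ∘ γ) := by
  refine continuous_iff_continuousAt.2 fun t₀ => ?_
  rw [ContinuousAt, Topology.IsLowerSet.nhds_eq_principal_Iic (α := WithLowerSet (P →o Q)),
    tendsto_principal]
  refine (eventually_all.2 fun x => ?_).mono fun t ht => (show γ t ≤ γ t₀ from ht)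
  have := (hγ x).continuousAt (x := t₀)
  rwa [ContinuousAt, Topology.IsLowerSet.nhds_eq_principal_Iic (α := WithLowerSet Q),
    tendsto_principal] at this

end Topology.WithLowerSet

namespace IsOrderContractible

variable {P : Type*} [Preorder P]

theorem contractibleSpace (h : IsOrderContractible P) : ContractibleSpace (WithLowerSet P) := by
  obtain ⟨c, hc⟩ := h
  rw [contractible_iff_id_nullhomotopic]
  exact ⟨WithLowerSet.toLowerSet c, WithLowerSet.homotopic_map_of_eqvGen hc⟩

/-- The homotopy is a path in the finite poset of monotone self-maps, whose components for the
lower set topology are the classes of `EqvGen (· ≤ ·)`. -/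
theorem of_contractibleSpace [Finite P] [ContractibleSpace (WithLowerSet P)] :
    IsOrderContractible P := by
  obtain ⟨c, ⟨H⟩⟩ := (contractible_iff_id_nullhomotopic (WithLowerSet P)).1 ‹_›
  let γ : unitInterval → P →o P := fun t =>
    ⟨fun x => WithLowerSet.ofLowerSet (H (t, WithLowerSet.toLowerSet x)),
      (Topology.IsLowerSet.monotone_iff_continuous (α := WithLowerSet P) (β := WithLowerSet P)).2
        (H.continuous.comp (.prodMk_right t))⟩
  have hγ := WithLowerSet.continuous_toLowerSet_orderHom γ fun x =>
    H.continuous.comp (.prodMk_left (WithLowerSet.toLowerSet x))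
  have hγ0 : γ 0 = OrderHom.id := OrderHom.ext _ _ (funext fun x => H.apply_zero x)
  have hγ1 : γ 1 = OrderHom.const P (WithLowerSet.ofLowerSet c) :=
    OrderHom.ext _ _ (funext fun x => H.apply_one x)
  have hK := ((isClopen_setOf_eqvGen_le (WithLowerSet.toLowerSet OrderHom.id)).preimage
    hγ).eq_univ ⟨0, show EqvGen _ _ (γ 0) from hγ0 ▸ .refl _⟩
  have h1 : EqvGen (· ≤ ·) OrderHom.id (γ 1) := Set.eq_univ_iff_forall.1 hK 1
  exact ⟨_, hγ1 ▸ h1⟩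

end IsOrderContractible

theorem isOrderContractible_iff_contractibleSpace {P : Type*} [Preorder P] [Finite P] :
    IsOrderContractible P ↔ ContractibleSpace (WithLowerSet P) :=
  ⟨IsOrderContractible.contractibleSpace, fun _ => .of_contractibleSpace⟩

theorem induced_downTop {P : Type*} [Preorder P] (A : Set P) :
    TopologicalSpace.induced ((↑) : A → P) (downTop P) = Topology.lowerSet A := by
  let := downTop P
  have : Topology.IsLowerSet P := ⟨rfl⟩
  let : TopologicalSpace A := .induced (↑) (downTop P)
  refine (Topology.isLowerSet_iff_nhds.2 fun a => ?_).topology_eq_lowerSetTopology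
  rw [nhds_induced, Topology.IsLowerSet.nhds_eq_principal_Iic, comap_principal]
  rfl

theorem subContractible_iff_isOrderContractible {P : Type*} [Preorder P] [Finite P] {A : Set P} :
    SubContractible A ↔ IsOrderContractible A := by
  rw [SubContractible, induced_downTop, isOrderContractible_iff_contractibleSpace]
  rfl

/-- Moving `x` to `y` is a monotone retraction of `S` onto `S \ {x}` comparable with the
identity: the hypotheses say that every other point of `S` sees `y` on the same side as `x`. -/
theorem isOrderContractible_diff_singleton_iff_of_retract {P : Type*} [Preorder P] {S : Set P}
    {x y : P} (hy : y ∈ S \ {x}) (hxy : SymmGen (· ≤ ·) y x)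
    (hle : ∀ z ∈ S, z ≠ x → z ≤ x → z ≤ y) (hge : ∀ z ∈ S, z ≠ x → x ≤ z → y ≤ z) :
    IsOrderContractible ↥(S \ {x}) ↔ IsOrderContractible S := by
  classical
  let r : S →o ↥(S \ {x}) :=
    { toFun := fun z => ⟨if (z : P) = x then y else z, by
        split_ifs with hz
        exacts [hy, ⟨z.2, hz⟩]⟩
      monotone' := by
        rintro ⟨a, ha⟩ ⟨b, hb⟩ (hab : a ≤ b)
        change (if a = x then y else a) ≤ (if b = x then y else b)
        split_ifs with hax hbx hbx
        · exact le_rfl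
        · exact hge b hb hbx (hax ▸ hab)
        · exact hle a ha hax (hbx ▸ hab)
        · exact hab }
  let i : ↥(S \ {x}) →o S := ⟨Set.inclusion Set.sdiff_subset, fun _ _ h => h⟩
  refine (IsOrderContractible.iff_of_retraction i r ?_ ?_).symm
  · exact OrderHom.ext _ _ (funext fun z => Subtype.ext (if_neg z.2.2))
  · refine hxy.imp (fun h z => ?_) (fun h z => ?_)
    · change (if (z : P) = x then y else z) ≤ z
      split_ifs with hz
      exacts [hz ▸ h, le_rfl]
    · change (z : P) ≤ (if (z : P) = x then y else z)
      split_ifs with hz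
      exacts [hz ▸ h, le_rfl]

section BeatPoints

variable {P : Type*} [PartialOrder P]

def IsDownBeatPointIn (S : Set P) (x : P) : Prop :=
  x ∈ S ∧ ∃ y ∈ S, y < x ∧ ∀ z ∈ S, z < x → z ≤ y

def IsUpBeatPointIn (S : Set P) (x : P) : Prop :=
  x ∈ S ∧ ∃ y ∈ S, x < y ∧ ∀ z ∈ S, x < z → y ≤ z

def IsBeatPointIn (S : Set P) (x : P) : Prop :=
  IsDownBeatPointIn S x ∨ IsUpBeatPointIn S x

theorem IsBeatPointIn.mem {S : Set P} {x : P} (h : IsBeatPointIn S x) : x ∈ S :=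
  h.elim (·.1) (·.1)

theorem IsBeatPointIn.isOrderContractible_diff_singleton_iff {S : Set P} {x : P}
    (h : IsBeatPointIn S x) : IsOrderContractible ↥(S \ {x}) ↔ IsOrderContractible S := by
  rcases h with ⟨-, y, hy, hyx, hmax⟩ | ⟨-, y, hy, hxy, hmin⟩
  · exact isOrderContractible_diff_singleton_iff_of_retract ⟨hy, hyx.ne⟩ (.of_le hyx.le)
      (fun z hz hzx h => hmax z hz (h.lt_of_ne hzx)) (fun _ _ _ h => hyx.le.trans h)
  · exact isOrderContractible_diff_singleton_iff_of_retract ⟨hy, hxy.ne'⟩ (.of_ge hxy.le)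
      (fun _ _ _ h => h.trans hxy.le) (fun z hz hzx h => hmin z hz (h.lt_of_ne' hzx))

theorem IsBeatPointIn.isWeakPointIn [Finite P] {S : Set P} {x : P} (h : IsBeatPointIn S x) :
    IsWeakPointIn S x := by
  rcases h with ⟨hx, y, hy, hyx, hmax⟩ | ⟨hx, y, hy, hxy, hmin⟩
  · exact ⟨hx, .inl (subContractible_iff_isOrderContractible.2
      (.of_isTop (m := ⟨y, hy, hyx⟩) fun z => hmax z z.2.1 z.2.2))⟩
  · exact ⟨hx, .inr (subContractible_iff_isOrderContractible.2
      (.of_isBot (m := ⟨y, hy, hxy⟩) fun z => hmin z z.2.1 z.2.2))⟩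

/-- A minimal point moved by `f` is a down beat point, with `f` of it below it. -/
theorem OrderHom.eq_id_of_le_id [Finite P] {S : Set P} (hS : ∀ x, ¬ IsDownBeatPointIn S x)
    {f : S →o S} (hf : f ≤ OrderHom.id) : f = OrderHom.id := by
  by_contra hne
  have hmoved : {z : S | f z ≠ z}.Nonempty := by
    contrapose! hne
    exact OrderHom.ext _ _ (funext fun z => not_not.1 fun h => hne.subset h)
  obtain ⟨z, hz⟩ := (Set.toFinite _).exists_minimal hmoved
  refine hS z ⟨z.2, f z, (f z).2, lt_of_le_of_ne (hf z) (Subtype.coe_ne_coe.2 hz.1),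
    fun w hw hwz => ?_⟩
  have hfw : f ⟨w, hw⟩ = ⟨w, hw⟩ := not_not.1 (hz.not_prop_of_lt (Subtype.mk_lt_mk.2 hwz))
  exact (Subtype.ext_iff.1 hfw).symm.le.trans (f.mono (Subtype.mk_le_mk.2 hwz.le))

theorem OrderHom.eq_id_of_id_le [Finite P] {S : Set P} (hS : ∀ x, ¬ IsUpBeatPointIn S x)
    {f : S →o S} (hf : OrderHom.id ≤ f) : f = OrderHom.id := by
  by_contra hne
  have hmoved : {z : S | f z ≠ z}.Nonempty := by
    contrapose! hne
    exact OrderHom.ext _ _ (funext fun z => not_not.1 fun h => hne.subset h)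
  obtain ⟨z, hz⟩ := (Set.toFinite _).exists_maximal hmoved
  refine hS z ⟨z.2, f z, (f z).2, lt_of_le_of_ne (hf z) (Subtype.coe_ne_coe.2 hz.1).symm,
    fun w hw hzw => ?_⟩
  have hfw : f ⟨w, hw⟩ = ⟨w, hw⟩ := not_not.1 (hz.not_prop_of_gt (Subtype.mk_lt_mk.2 hzw))
  exact (f.mono (Subtype.mk_le_mk.2 hzw.le)).trans (Subtype.ext_iff.1 hfw).le

theorem IsOrderContractible.exists_isBeatPointIn [Finite P] {S : Set P}
    (h : IsOrderContractible S) (hS : S.Nontrivial) : ∃ x, IsBeatPointIn S x := by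
  by_contra! hbeat
  obtain ⟨c, hc⟩ := h
  have hid : ∀ f g : S →o S, EqvGen (· ≤ ·) f g → (f = OrderHom.id ↔ g = OrderHom.id) := by
    intro f g hfg
    induction hfg with
    | rel f g hfg =>
      refine ⟨fun hf => ?_, fun hg => ?_⟩
      · exact OrderHom.eq_id_of_id_le (fun x hx => hbeat x (.inr hx)) (hf ▸ hfg)
      · exact OrderHom.eq_id_of_le_id (fun x hx => hbeat x (.inl hx)) (hg ▸ hfg)
    | refl => rfl
    | symm _ _ _ ih => exact ih.symm
    | trans _ _ _ _ _ ih₁ ih₂ => exact ih₁.trans ih₂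
  have hconst := (hid _ _ hc).1 rfl
  obtain ⟨a, ha, b, hb, hab⟩ := hS
  exact hab (congrArg Subtype.val ((DFunLike.congr_fun hconst (⟨a, ha⟩ : S)).symm.trans
    (DFunLike.congr_fun hconst (⟨b, hb⟩ : S))))

end BeatPoints

section Collapses

variable {P : Type*} [PartialOrder P]

theorem spaceCollapsible_singleton (a : P) : SpaceCollapsible {a} :=
  ⟨a, rfl, .refl⟩

theorem SpaceCollapsible.of_isWeakPointIn {A : Set P} {x : P} (hx : IsWeakPointIn A x)
    (h : SpaceCollapsible (A \ {x})) : SpaceCollapsible A :=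
  let ⟨c, hc, hcol⟩ := h
  ⟨c, hc.1, .head ⟨x, hx, rfl⟩ hcol⟩

theorem IsOrderContractible.spaceCollapsible [Finite P] {S : Set P}
    (h : IsOrderContractible S) : SpaceCollapsible S := by
  induction S using WellFoundedLT.induction with | _ S ih => ?_
  obtain ⟨⟨a, ha⟩⟩ := h.nonempty
  rcases S.subsingleton_or_nontrivial with hS | hS
  · rw [hS.eq_singleton_of_mem ha]
    exact spaceCollapsible_singleton a
  · obtain ⟨x, hx⟩ := h.exists_isBeatPointIn hS
    exact .of_isWeakPointIn hx.isWeakPointIn (ih _ (Set.sdiff_singleton_ssubset.2 hx.mem)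
      (hx.isOrderContractible_diff_singleton_iff.2 h))

end Collapses

section SumLex

instance Lex.finite {α : Type*} [Finite α] : Finite (Lex α) :=
  ‹Finite α›

variable {α β γ δ : Type*} [Preorder α] [Preorder β] [Preorder γ] [Preorder δ]

def OrderHom.sumLexMap (f : α →o γ) (g : β →o δ) : α ⊕ₗ β →o γ ⊕ₗ δ where
  toFun w := toLex (Sum.map f g (ofLex w))
  monotone' := by
    rintro (a | b) (a' | b') h
    · exact Lex.inl_le_inl_iff.2 (f.mono (Lex.inl_le_inl_iff.1 h))
    · exact Lex.inl_le_inr _ _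
    · exact absurd h Lex.not_inr_le_inl
    · exact Lex.inr_le_inr_iff.2 (g.mono (Lex.inr_le_inr_iff.1 h))

theorem OrderHom.sumLexMap_id :
    (OrderHom.id : α →o α).sumLexMap (OrderHom.id : β →o β) = OrderHom.id := by
  ext (a | b) <;> rfl

theorem OrderHom.sumLexMap_le_sumLexMap {f f' : α →o γ} {g g' : β →o δ} (hf : f ≤ f')
    (hg : g ≤ g') : f.sumLexMap g ≤ f'.sumLexMap g' := by
  rintro (a | b)
  · exact Lex.inl_le_inl_iff.2 (hf a)
  · exact Lex.inr_le_inr_iff.2 (hg b)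

theorem IsOrderContractible.sumLex_left (h : IsOrderContractible α) :
    IsOrderContractible (α ⊕ₗ β) := by
  obtain ⟨c, hc⟩ := h
  have := hc.lift (p := (· ≤ ·)) (·.sumLexMap (OrderHom.id : β →o β))
    fun _ _ h => OrderHom.sumLexMap_le_sumLexMap h le_rfl
  rw [OrderHom.sumLexMap_id] at this
  refine ⟨toLex (inl c), this.trans _ _ _ (.symm _ _ (.rel _ _ ?_))⟩
  simp [OrderHom.le_def, Sum.forall, OrderHom.sumLexMap]

theorem IsOrderContractible.sumLex_right (h : IsOrderContractible β) :
    IsOrderContractible (α ⊕ₗ β) := by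
  obtain ⟨c, hc⟩ := h
  have := hc.lift (p := (· ≤ ·)) ((OrderHom.id : α →o α).sumLexMap ·)
    fun _ _ h => OrderHom.sumLexMap_le_sumLexMap le_rfl h
  rw [OrderHom.sumLexMap_id] at this
  refine ⟨toLex (inr c), this.trans _ _ _ (.rel _ _ ?_)⟩
  simp [OrderHom.le_def, Sum.forall, OrderHom.sumLexMap]

end SumLex

section JoinSet

variable {X Y : Type*}

/-- The subspace `A ⊕ B` of the non-Hausdorff join `X ⊕ₗ Y`. -/
def joinSet (A : Set X) (B : Set Y) : Set (X ⊕ₗ Y) :=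
  {w | Sum.elim (· ∈ A) (· ∈ B) (ofLex w)}

variable {A : Set X} {B : Set Y} {x : X} {y : Y}

@[simp]
theorem toLex_inl_mem_joinSet : toLex (inl x) ∈ joinSet A B ↔ x ∈ A :=
  Iff.rfl

@[simp]
theorem toLex_inr_mem_joinSet : toLex (inr y) ∈ joinSet A B ↔ y ∈ B :=
  Iff.rfl

theorem joinSet_univ : joinSet (Set.univ : Set X) (Set.univ : Set Y) = Set.univ := by
  simp [Set.ext_iff, Sum.forall]

theorem joinSet_singleton_empty (a : X) : joinSet {a} (∅ : Set Y) = {toLex (inl a)} := by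
  simp [Set.ext_iff, Sum.forall]

theorem joinSet_empty_singleton (b : Y) : joinSet (∅ : Set X) {b} = {toLex (inr b)} := by
  simp [Set.ext_iff, Sum.forall]

theorem joinSet_diff_inl : joinSet (A \ {x}) B = joinSet A B \ {toLex (inl x)} := by
  simp [Set.ext_iff, Sum.forall]

theorem joinSet_diff_inr : joinSet A (B \ {y}) = joinSet A B \ {toLex (inr y)} := by
  simp [Set.ext_iff, Sum.forall]

theorem joinSet_nontrivial (hA : A.Nonempty) (hB : B.Nonempty) : (joinSet A B).Nontrivial :=
  ⟨toLex (inl hA.some), hA.some_mem, toLex (inr hB.some), hB.some_mem, by simp⟩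

variable [Preorder X] [Preorder Y]

theorem setOf_mem_joinSet_lt_inl :
    {w | w ∈ joinSet A B ∧ w < toLex (inl x)} = joinSet {a | a ∈ A ∧ a < x} (∅ : Set Y) := by
  simp [Set.ext_iff, Sum.forall]

theorem setOf_mem_joinSet_inl_lt :
    {w | w ∈ joinSet A B ∧ toLex (inl x) < w} = joinSet {a | a ∈ A ∧ x < a} B := by
  simp [Set.ext_iff, Sum.forall]

theorem setOf_mem_joinSet_lt_inr :
    {w | w ∈ joinSet A B ∧ w < toLex (inr y)} = joinSet A {b | b ∈ B ∧ b < y} := by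
  simp [Set.ext_iff, Sum.forall]

theorem setOf_mem_joinSet_inr_lt :
    {w | w ∈ joinSet A B ∧ toLex (inr y) < w} = joinSet (∅ : Set X) {b | b ∈ B ∧ y < b} := by
  simp [Set.ext_iff, Sum.forall]

def joinSetOrderIso (A : Set X) (B : Set Y) : ↥(joinSet A B) ≃o ↥A ⊕ₗ ↥B where
  toEquiv := (Equiv.subtypeSum (p := (· ∈ joinSet A B))).trans toLex
  map_rel_iff' := by
    rintro ⟨a | b, ha⟩ ⟨a' | b', hb⟩
    · exact Lex.inl_le_inl_iff.trans (Lex.inl_le_inl_iff (a := a) (b := a')).symm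
    · exact iff_of_true (Lex.inl_le_inr _ _) (Lex.inl_le_inr _ _)
    · exact iff_of_false Lex.not_inr_le_inl Lex.not_inr_le_inl
    · exact Lex.inr_le_inr_iff.trans (Lex.inr_le_inr_iff (a := b) (b := b')).symm

theorem isOrderContractible_joinSet_empty_left :
    IsOrderContractible ↥(joinSet (∅ : Set X) B) ↔ IsOrderContractible B :=
  ((joinSetOrderIso ∅ B).trans OrderIso.emptySumLex).isOrderContractible_iff

theorem isOrderContractible_joinSet_empty_right :
    IsOrderContractible ↥(joinSet A (∅ : Set Y)) ↔ IsOrderContractible A :=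
  ((joinSetOrderIso A ∅).trans OrderIso.sumLexEmpty).isOrderContractible_iff

end JoinSet

section JoinContractible

variable {X Y : Type*} [PartialOrder X] [PartialOrder Y] {A : Set X} {B : Set Y} {x : X} {y : Y}

theorem IsBeatPointIn.of_inl_joinSet (h : IsBeatPointIn (joinSet A B) (toLex (inl x))) :
    IsBeatPointIn A x ∨ IsOrderContractible B := by
  rcases h with ⟨hx, w, hw, hwx, hmax⟩ | ⟨hx, w, hw, hxw, hmin⟩
  · cases w with | h w => ?_
    rcases w with a | b
    · exact .inl (.inl ⟨hx, a, hw, Lex.inl_lt_inl_iff.1 hwx, fun z hz hzx =>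
        Lex.inl_le_inl_iff.1 (hmax (toLex (inl z)) hz (Lex.inl_lt_inl_iff.2 hzx))⟩)
    · exact absurd hwx Lex.not_inr_lt_inl
  · cases w with | h w => ?_
    rcases w with a | b
    · exact .inl (.inr ⟨hx, a, hw, Lex.inl_lt_inl_iff.1 hxw, fun z hz hxz =>
        Lex.inl_le_inl_iff.1 (hmin (toLex (inl z)) hz (Lex.inl_lt_inl_iff.2 hxz))⟩)
    · exact .inr (.of_isBot (m := ⟨b, hw⟩) fun z => show b ≤ z from
        Lex.inr_le_inr_iff.1 (hmin (toLex (inr z)) z.2 (Lex.inl_lt_inr _ _)))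

theorem IsBeatPointIn.of_inr_joinSet (h : IsBeatPointIn (joinSet A B) (toLex (inr y))) :
    IsBeatPointIn B y ∨ IsOrderContractible A := by
  rcases h with ⟨hy, w, hw, hwy, hmax⟩ | ⟨hy, w, hw, hyw, hmin⟩
  · cases w with | h w => ?_
    rcases w with a | b
    · exact .inr (.of_isTop (m := ⟨a, hw⟩) fun z => show (z : X) ≤ a from
        Lex.inl_le_inl_iff.1 (hmax (toLex (inl z)) z.2 (Lex.inl_lt_inr _ _)))
    · exact .inl (.inl ⟨hy, b, hw, Lex.inr_lt_inr_iff.1 hwy, fun z hz hzy =>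
        Lex.inr_le_inr_iff.1 (hmax (toLex (inr z)) hz (Lex.inr_lt_inr_iff.2 hzy))⟩)
  · cases w with | h w => ?_
    rcases w with a | b
    · exact absurd hyw Lex.not_inr_lt_inl
    · exact .inl (.inr ⟨hy, b, hw, Lex.inr_lt_inr_iff.1 hyw, fun z hz hyz =>
        Lex.inr_le_inr_iff.1 (hmin (toLex (inr z)) hz (Lex.inr_lt_inr_iff.2 hyz))⟩)

variable [Finite X] [Finite Y]

theorem IsOrderContractible.of_joinSet (h : IsOrderContractible ↥(joinSet A B)) :
    IsOrderContractible A ∨ IsOrderContractible B := by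
  induction A using WellFoundedLT.induction generalizing B with | _ A ihA => ?_
  induction B using WellFoundedLT.induction with | _ B ihB => ?_
  rcases A.eq_empty_or_nonempty with rfl | hA
  · exact .inr (isOrderContractible_joinSet_empty_left.1 h)
  rcases B.eq_empty_or_nonempty with rfl | hB
  · exact .inl (isOrderContractible_joinSet_empty_right.1 h)
  obtain ⟨z, hz⟩ := h.exists_isBeatPointIn (joinSet_nontrivial hA hB)
  rw [← hz.isOrderContractible_diff_singleton_iff] at h
  cases z with | h z => ?_
  rcases z with x | y
  · rcases hz.of_inl_joinSet with hx | hB'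
    · rw [← joinSet_diff_inl] at h
      exact (ihA _ (Set.sdiff_singleton_ssubset.2 hx.mem) h).imp_left
        hx.isOrderContractible_diff_singleton_iff.1
    · exact .inr hB'
  · rcases hz.of_inr_joinSet with hy | hA'
    · rw [← joinSet_diff_inr] at h
      exact (ihB _ (Set.sdiff_singleton_ssubset.2 hy.mem) h).imp_right
        hy.isOrderContractible_diff_singleton_iff.1
    · exact .inl hA'

theorem isOrderContractible_joinSet_iff :
    IsOrderContractible ↥(joinSet A B) ↔ IsOrderContractible A ∨ IsOrderContractible B :=
  ⟨IsOrderContractible.of_joinSet, fun h => (joinSetOrderIso A B).isOrderContractible_iff.2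
    (h.elim .sumLex_left .sumLex_right)⟩

theorem isWeakPointIn_joinSet_inl :
    IsWeakPointIn (joinSet A B) (toLex (inl x)) ↔
      IsWeakPointIn A x ∨ x ∈ A ∧ IsOrderContractible B := by
  simp only [IsWeakPointIn, subContractible_iff_isOrderContractible, setOf_mem_joinSet_lt_inl,
    setOf_mem_joinSet_inl_lt, isOrderContractible_joinSet_iff, toLex_inl_mem_joinSet]
  have : ¬ IsOrderContractible (∅ : Set Y) := fun h => h.nonempty.elim fun z => z.2
  tauto

theorem isWeakPointIn_joinSet_inr :
    IsWeakPointIn (joinSet A B) (toLex (inr y)) ↔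
      IsWeakPointIn B y ∨ y ∈ B ∧ IsOrderContractible A := by
  simp only [IsWeakPointIn, subContractible_iff_isOrderContractible, setOf_mem_joinSet_lt_inr,
    setOf_mem_joinSet_inr_lt, isOrderContractible_joinSet_iff, toLex_inr_mem_joinSet]
  have : ¬ IsOrderContractible (∅ : Set X) := fun h => h.nonempty.elim fun z => z.2
  tauto

end JoinContractible

section JoinCollapsible

variable {X Y : Type*} [PartialOrder X] [PartialOrder Y] [Finite X] [Finite Y]
  {A A' : Set X} {B B' : Set Y}

theorem ElemSpaceCollapse.joinSet_left (h : ElemSpaceCollapse A A') (B : Set Y) :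
    ElemSpaceCollapse (joinSet A B) (joinSet A' B) := by
  obtain ⟨x, hx, rfl⟩ := h
  exact ⟨toLex (inl x), isWeakPointIn_joinSet_inl.2 (.inl hx), joinSet_diff_inl⟩

theorem ElemSpaceCollapse.joinSet_right (h : ElemSpaceCollapse B B') (A : Set X) :
    ElemSpaceCollapse (joinSet A B) (joinSet A B') := by
  obtain ⟨y, hy, rfl⟩ := h
  exact ⟨toLex (inr y), isWeakPointIn_joinSet_inr.2 (.inl hy), joinSet_diff_inr⟩

theorem SpaceCollapses.joinSet_left (h : SpaceCollapses A A') (B : Set Y) :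
    SpaceCollapses (joinSet A B) (joinSet A' B) :=
  h.lift (joinSet · B) fun _ _ h => h.joinSet_left B

theorem SpaceCollapses.joinSet_right (h : SpaceCollapses B B') (A : Set X) :
    SpaceCollapses (joinSet A B) (joinSet A B') :=
  h.lift (joinSet A ·) fun _ _ h => h.joinSet_right A

theorem IsOrderContractible.spaceCollapses_joinSet_empty_right (hA : IsOrderContractible A)
    (B : Set Y) : SpaceCollapses (joinSet A B) (joinSet A ∅) := by
  induction B using WellFoundedLT.induction with | _ B ih => ?_
  rcases B.eq_empty_or_nonempty with rfl | ⟨y, hy⟩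
  · exact .refl
  · exact .head ⟨toLex (inr y), isWeakPointIn_joinSet_inr.2 (.inr ⟨hy, hA⟩), joinSet_diff_inr⟩
      (ih _ (Set.sdiff_singleton_ssubset.2 hy))

theorem IsOrderContractible.spaceCollapses_joinSet_empty_left (hB : IsOrderContractible B)
    (A : Set X) : SpaceCollapses (joinSet A B) (joinSet ∅ B) := by
  induction A using WellFoundedLT.induction with | _ A ih => ?_
  rcases A.eq_empty_or_nonempty with rfl | ⟨x, hx⟩
  · exact .refl
  · exact .head ⟨toLex (inl x), isWeakPointIn_joinSet_inl.2 (.inr ⟨hx, hB⟩), joinSet_diff_inl⟩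
      (ih _ (Set.sdiff_singleton_ssubset.2 hx))

theorem SpaceCollapsible.joinSet_left (h : SpaceCollapsible A) (B : Set Y) :
    SpaceCollapsible (joinSet A B) := by
  obtain ⟨a, ha, hcol⟩ := h
  refine ⟨toLex (inl a), ha, ?_⟩
  rw [← joinSet_singleton_empty]
  have hpt : IsOrderContractible ({a} : Set X) := .of_subsingleton ⟨a, rfl⟩
  exact (hcol.joinSet_left B).trans (hpt.spaceCollapses_joinSet_empty_right B)

theorem SpaceCollapsible.joinSet_right (h : SpaceCollapsible B) (A : Set X) :
    SpaceCollapsible (joinSet A B) := by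
  obtain ⟨b, hb, hcol⟩ := h
  refine ⟨toLex (inr b), hb, ?_⟩
  rw [← joinSet_empty_singleton]
  have hpt : IsOrderContractible ({b} : Set Y) := .of_subsingleton ⟨b, rfl⟩
  exact (hcol.joinSet_right A).trans (hpt.spaceCollapses_joinSet_empty_left A)

theorem SpaceCollapsible.of_joinSet (h : SpaceCollapsible (joinSet A B)) :
    SpaceCollapsible A ∨ SpaceCollapsible B := by
  obtain ⟨p, -, hp⟩ := h
  generalize hS : joinSet A B = S at hp
  induction hp using ReflTransGen.head_induction_on generalizing A B with
  | refl =>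
    cases p with | h p => ?_
    rcases p with a | b
    · have hA : A = {a} := by
        ext a'
        simpa using Set.ext_iff.1 hS (toLex (inl a'))
      exact .inl (hA ▸ spaceCollapsible_singleton a)
    · have hB : B = {b} := by
        ext b'
        simpa using Set.ext_iff.1 hS (toLex (inr b'))
      exact .inr (hB ▸ spaceCollapsible_singleton b)
  | head hstep _ ih =>
    obtain ⟨z, hz, rfl⟩ := hstep
    subst hS
    cases z with | h z => ?_
    rcases z with x | y
    · rcases isWeakPointIn_joinSet_inl.1 hz with hx | ⟨-, hB⟩
      · exact (ih joinSet_diff_inl).imp_left (.of_isWeakPointIn hx)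
      · exact .inr hB.spaceCollapsible
    · rcases isWeakPointIn_joinSet_inr.1 hz with hy | ⟨-, hA⟩
      · exact (ih joinSet_diff_inr).imp_right (.of_isWeakPointIn hy)
      · exact .inl hA.spaceCollapsible

theorem spaceCollapsible_joinSet_iff :
    SpaceCollapsible (joinSet A B) ↔ SpaceCollapsible A ∨ SpaceCollapsible B :=
  ⟨SpaceCollapsible.of_joinSet, fun h => h.elim (·.joinSet_left B) (·.joinSet_right A)⟩

end JoinCollapsible

theorem join_collapsible_iff_general (X Y : Type) [PartialOrder X] [Fintype X]
    [PartialOrder Y] [Fintype Y] :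
    SpaceCollapsible (Set.univ : Set (X ⊕ₗ Y)) ↔
      SpaceCollapsible (Set.univ : Set X) ∨ SpaceCollapsible (Set.univ : Set Y) := by
  rw [← joinSet_univ]
  exact spaceCollapsible_joinSet_iff

theorem join_collapsible_iff (X Y : Type) [PartialOrder X] [Fintype X]
    [PartialOrder Y] [Fintype Y] [Nonempty X] [Nonempty Y] :
    SpaceCollapsible (Set.univ : Set (X ⊕ₗ Y)) ↔
      SpaceCollapsible (Set.univ : Set X) ∨ SpaceCollapsible (Set.univ : Set Y) :=
  join_collapsible_iff_general X Y
end
end
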